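/- arXiv:2404.05672 — 4 statements merged into one kernel-verified Lean document; each statement's English description precedes it below -/
import Mathlib

section
/- For all integers n ≥ 1, the total number of runs of ascents over all Catalan words of length n equals C(2n-1, n); that is, Σ_{w ∈ C_n} runs(w) = C(2n-1, n). -/
/-!
Cutting a nonempty Catalan word at its first return to `0` writes it uniquely as
`0 (u + 1) z` with `u`, `z` Catalan words (`z` empty or starting with `0`). Runs of ascents
are additive under this decomposition, except that an empty `z` contributes nothing although
the empty word has one run. Hence the totals `a n` satisfy
`a (n + 1) + cat n = ∑_{i+j=n} (a i * cat j + cat i * a j)` with `a 0 = 1`. So does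
`C(2n-1, n)`: as `2 C(2n-1, n) = C(2n, n)` for `n > 0`, this reduces to
`∑_{i+j=n} cat i * C(2j, j) = C(2n+1, n)`, which Gosper's algorithm proves by telescoping.
-/

/-- The set of Catalan words of length `n`: words `w` over ℕ with `w 1 = 0` and
`w (i+1) ≤ w i + 1` for all `i`. -/
def CatalanWord (n : ℕ) : Set (List ℕ) :=
  {w | w.length = n ∧ w.getD 0 0 = 0 ∧
    ∀ i, i + 1 < n → w.getD (i + 1) 0 ≤ w.getD i 0 + 1}

/-- Number of runs of ascents of `w`: `1 + #{i : w i ≥ w (i+1)}`. -/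
def ascRuns (w : List ℕ) : ℕ :=
  1 + ((Finset.range (w.length - 1)).filter
    (fun i => w.getD (i + 1) 0 ≤ w.getD i 0)).card

open Finset Nat

theorem Nat.two_mul_choose_two_mul_add_one (n : ℕ) :
    2 * (2 * n + 1).choose n = centralBinom (n + 1) := by
  rw [centralBinom_eq_two_mul_choose, show 2 * (n + 1) = 2 * n + 1 + 1 by ring,
    choose_succ_succ, choose_symm_half, two_mul]

theorem cast_catalan_eq_centralBinom_div {K : Type*} [Field K] [CharZero K] (n : ℕ) :
    (catalan n : K) = centralBinom n / (n + 1) := by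
  rw [eq_div_iff n.cast_add_one_ne_zero, mul_comm]
  exact_mod_cast succ_mul_catalan_eq_centralBinom n

theorem Nat.cast_centralBinom_succ_eq_div {K : Type*} [Field K] [CharZero K] (n : ℕ) :
    (centralBinom (n + 1) : K) = 2 * (2 * n + 1) * centralBinom n / (n + 1) := by
  rw [eq_div_iff n.cast_add_one_ne_zero, mul_comm]
  exact_mod_cast succ_mul_centralBinom_succ n

/-- Gosper's algorithm applied to `i ↦ catalan i * centralBinom (n - i)` produces this
antidifference. -/
def gosperCatalanCentralBinom (n i : ℕ) : ℚ :=
  (2 * i - 2 * n - 1) / (n + 1) * centralBinom i * centralBinom (n - i)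

theorem catalan_mul_centralBinom_eq_sub {n i : ℕ} (h : i < n) :
    (catalan i * centralBinom (n - i) : ℚ) =
      gosperCatalanCentralBinom n (i + 1) - gosperCatalanCentralBinom n i := by
  obtain ⟨k, rfl⟩ := Nat.exists_eq_add_of_lt h
  simp only [gosperCatalanCentralBinom, show i + k + 1 - (i + 1) = k by omega,
    show i + k + 1 - i = k + 1 by omega, cast_catalan_eq_centralBinom_div,
    cast_centralBinom_succ_eq_div]
  push_cast
  field_simp
  ring

theorem sum_antidiagonal_catalan_mul_centralBinom (n : ℕ) :
    ∑ ij ∈ antidiagonal n, catalan ij.1 * centralBinom ij.2 = (2 * n + 1).choose n := by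
  have h2 : ((2 * n + 1).choose n : ℚ) = centralBinom (n + 1) / 2 := by
    rw [eq_div_iff two_ne_zero, mul_comm]
    exact_mod_cast two_mul_choose_two_mul_add_one n
  rw [Nat.sum_antidiagonal_eq_sum_range_succ_mk, sum_range_succ]
  qify
  rw [sum_congr rfl fun i hi => catalan_mul_centralBinom_eq_sub (mem_range.mp hi), sum_range_sub]
  simp only [gosperCatalanCentralBinom, Nat.sub_self, Nat.sub_zero, centralBinom_zero, h2,
    cast_catalan_eq_centralBinom_div, cast_centralBinom_succ_eq_div]
  push_cast
  field_simp
  ring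

theorem sum_antidiagonal_ite_snd_eq_zero {M : Type*} [AddCommMonoid M] (f : ℕ → M) (n : ℕ) :
    ∑ ij ∈ antidiagonal n, (if ij.2 = 0 then f ij.1 else 0) = f n := by
  rw [← sum_filter]
  convert sum_singleton (fun ij : ℕ × ℕ => f ij.1) (n, 0)
  ext ⟨i, j⟩
  simp only [mem_filter, HasAntidiagonal.mem_antidiagonal, mem_singleton, Prod.mk.injEq]
  omega

theorem Nat.two_mul_choose_two_mul_sub_one (n : ℕ) :
    2 * (2 * n - 1).choose n = centralBinom n + if n = 0 then 1 else 0 := by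
  cases n with
  | zero => simp
  | succ k =>
    rw [if_neg k.succ_ne_zero, add_zero, ← two_mul_choose_two_mul_add_one,
      show 2 * (k + 1) - 1 = 2 * k + 1 by omega, choose_symm_half]

theorem choose_two_mul_sub_one_succ_add_catalan (n : ℕ) :
    (2 * (n + 1) - 1).choose (n + 1) + catalan n =
      ∑ ij ∈ antidiagonal n,
        ((2 * ij.1 - 1).choose ij.1 * catalan ij.2 +
          catalan ij.1 * (2 * ij.2 - 1).choose ij.2) := by
  have hsymm : (2 * (n + 1) - 1).choose (n + 1) = (2 * n + 1).choose n := by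
    rw [show 2 * (n + 1) - 1 = 2 * n + 1 by omega, choose_symm_half]
  have hlast :
      ∑ ij ∈ antidiagonal n, catalan ij.1 * (if ij.2 = 0 then 1 else 0) = catalan n := by
    simpa only [mul_ite, mul_one, mul_zero] using sum_antidiagonal_ite_snd_eq_zero catalan n
  have hswap : ∑ ij ∈ antidiagonal n, (2 * ij.1 - 1).choose ij.1 * catalan ij.2 =
      ∑ ij ∈ antidiagonal n, catalan ij.1 * (2 * ij.2 - 1).choose ij.2 := by
    rw [← Nat.sum_antidiagonal_swap]
    simp only [Prod.fst_swap, Prod.snd_swap, mul_comm]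
  rw [hsymm, sum_add_distrib, hswap, ← two_mul, mul_sum]
  simp only [mul_left_comm 2, two_mul_choose_two_mul_sub_one, mul_add, sum_add_distrib,
    sum_antidiagonal_catalan_mul_centralBinom, hlast]

theorem eq_choose_two_mul_sub_one_of_succ_add_catalan {a : ℕ → ℕ} (h0 : a 0 = 1)
    (h : ∀ n, a (n + 1) + catalan n =
      ∑ ij ∈ antidiagonal n, (a ij.1 * catalan ij.2 + catalan ij.1 * a ij.2)) (n : ℕ) :
    a n = (2 * n - 1).choose n := by
  induction n using Nat.strong_induction_on with
  | _ n ih =>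
    cases n with
    | zero => simpa using h0
    | succ n =>
      have hrec := h n
      rw [sum_congr rfl fun ij hij => by
        rw [ih ij.1 (by have := mem_antidiagonal.mp hij; omega),
          ih ij.2 (by have := mem_antidiagonal.mp hij; omega)]] at hrec
      have := choose_two_mul_sub_one_succ_add_catalan n
      omega

@[simp] theorem ascRuns_nil : ascRuns [] = 1 := rfl

@[simp] theorem ascRuns_singleton (a : ℕ) : ascRuns [a] = 1 := rfl

theorem ascRuns_cons_cons (a b : ℕ) (t : List ℕ) :
    ascRuns (a :: b :: t) = ascRuns (b :: t) + if b ≤ a then 1 else 0 := by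
  simp only [ascRuns, List.length_cons, Nat.add_sub_cancel, card_filter]
  rw [sum_range_succ']
  simp only [List.getD_cons_succ, List.getD_cons_zero]
  ring

theorem ascRuns_map_of_strictMono {f : ℕ → ℕ} (hf : StrictMono f) :
    ∀ w : List ℕ, ascRuns (w.map f) = ascRuns w
  | [] => rfl
  | [_] => rfl
  | a :: b :: t => by
    simp only [List.map_cons, ascRuns_cons_cons, hf.le_iff_le]
    rw [← List.map_cons, ascRuns_map_of_strictMono hf (b :: t)]

theorem ascRuns_zero_cons_map_succ (u : List ℕ) : ascRuns (0 :: u.map (· + 1)) = ascRuns u := by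
  cases u with
  | nil => rfl
  | cons a t =>
    rw [List.map_cons, ascRuns_cons_cons, if_neg (by omega), add_zero]
    exact ascRuns_map_of_strictMono (fun _ _ h => Nat.add_lt_add_right h 1) (a :: t)

theorem ascRuns_append_cons_of_le_getLast :
    ∀ (xs : List ℕ) (hxs : xs ≠ []) {y : ℕ} (ys : List ℕ), y ≤ xs.getLast hxs →
      ascRuns (xs ++ y :: ys) = ascRuns xs + ascRuns (y :: ys)
  | [a], _, y, ys, hy => by
    simp only [List.getLast_singleton] at hy
    simp [ascRuns_cons_cons, hy, add_comm]
  | a :: b :: t, _, y, ys, hy => by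
    rw [List.getLast_cons (List.cons_ne_nil b t)] at hy
    simp only [List.cons_append, ascRuns_cons_cons] at *
    rw [← List.cons_append,
      ascRuns_append_cons_of_le_getLast (b :: t) (List.cons_ne_nil b t) ys hy]
    ring

def catalanJoin (u z : List ℕ) : List ℕ := 0 :: (u.map (· + 1) ++ z)

theorem ascRuns_catalanJoin_add (u : List ℕ) {z : List ℕ} (hz : z.getD 0 0 = 0) :
    ascRuns (catalanJoin u z) + (if z = [] then 1 else 0) = ascRuns u + ascRuns z := by
  cases z with
  | nil => simp [catalanJoin, ascRuns_zero_cons_map_succ]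
  | cons c z =>
    rw [List.getD_cons_zero] at hz
    subst hz
    rw [catalanJoin, ← List.cons_append, if_neg (List.cons_ne_nil _ _), add_zero,
      ascRuns_append_cons_of_le_getLast _ (List.cons_ne_nil _ _) _ (Nat.zero_le _),
      ascRuns_zero_cons_map_succ]

theorem takeWhile_ne_zero_map_succ_append (u : List ℕ) {z : List ℕ} (hz : z.getD 0 0 = 0) :
    (u.map (· + 1) ++ z).takeWhile (· ≠ 0) = u.map (· + 1) := by
  rw [List.takeWhile_append_of_pos (by simp)]
  cases z with
  | nil => simp
  | cons c z => simp_all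

theorem dropWhile_ne_zero_map_succ_append (u : List ℕ) {z : List ℕ} (hz : z.getD 0 0 = 0) :
    (u.map (· + 1) ++ z).dropWhile (· ≠ 0) = z := by
  rw [List.dropWhile_append_of_pos (by simp)]
  cases z with
  | nil => simp
  | cons c z => simp_all

theorem catalanJoin_inj {u z u' z' : List ℕ} (hz : z.getD 0 0 = 0) (hz' : z'.getD 0 0 = 0)
    (h : catalanJoin u z = catalanJoin u' z') : u = u' ∧ z = z' := by
  have h := List.cons_injective h
  refine ⟨List.map_injective_iff.mpr (add_left_injective 1) ?_, ?_⟩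
  · rw [← takeWhile_ne_zero_map_succ_append u hz, h, takeWhile_ne_zero_map_succ_append u' hz']
  · rw [← dropWhile_ne_zero_map_succ_append u hz, h, dropWhile_ne_zero_map_succ_append u' hz']

def IsCatalan (w : List ℕ) : Prop :=
  w.getD 0 0 = 0 ∧ w.IsChain (fun a b => b ≤ a + 1)

theorem mem_catalanWord_iff {n : ℕ} {w : List ℕ} :
    w ∈ CatalanWord n ↔ w.length = n ∧ IsCatalan w := by
  have hget : ∀ i (hi : i + 1 < w.length),
      (w.getD (i + 1) 0 ≤ w.getD i 0 + 1 ↔ w[i + 1] ≤ w[i] + 1) := fun i hi => by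
    rw [List.getD_eq_getElem _ _ hi, List.getD_eq_getElem _ _ (Nat.lt_of_succ_lt hi)]
  simp only [CatalanWord, IsCatalan, Set.mem_ofPred_eq, List.isChain_iff_getElem]
  constructor
  · rintro ⟨rfl, h0, h⟩
    exact ⟨rfl, h0, fun i hi => (hget i hi).mp (h i hi)⟩
  · rintro ⟨rfl, h0, h⟩
    exact ⟨rfl, h0, fun i hi => (hget i hi).mpr (h i hi)⟩

theorem isCatalan_catalanJoin {u z : List ℕ} (hu : IsCatalan u) (hz : IsCatalan z) :
    IsCatalan (catalanJoin u z) := by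
  refine ⟨rfl, List.isChain_cons.mpr
    ⟨fun y hy => ?_, List.isChain_append.mpr ⟨?_, hz.2, ?_⟩⟩⟩
  · cases u with
    | nil =>
      cases z <;> simp_all [IsCatalan]
      omega
    | cons a t => simp_all [IsCatalan]
  · exact (List.isChain_map _).mpr (hu.2.imp fun _ _ h => by omega)
  · intro x _ y hy
    cases z <;> simp_all [IsCatalan]
    omega

theorem IsCatalan.exists_eq_catalanJoin {w : List ℕ} (hw : IsCatalan w) (hne : w ≠ []) :
    ∃ u z, IsCatalan u ∧ IsCatalan z ∧ w = catalanJoin u z := by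
  obtain ⟨a, t, rfl⟩ := List.exists_cons_of_ne_nil hne
  obtain ⟨ha, hchain⟩ := hw
  rw [List.getD_cons_zero] at ha
  subst ha
  set P := t.takeWhile (· ≠ 0)
  set z := t.dropWhile (· ≠ 0)
  have hPz : P ++ z = t := List.takeWhile_append_dropWhile
  have hP : ∀ x ∈ P, x ≠ 0 := fun x hx => by simpa using List.mem_takeWhile_imp hx
  have ht : t.IsChain (fun a b => b ≤ a + 1) := hchain.tail
  refine ⟨P.map (· - 1), z, ⟨?_, ?_⟩, ⟨?_, ?_⟩, ?_⟩
  · cases hPc : P with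
    | nil => rfl
    | cons p ps =>
      have hp : p ≤ 1 := by
        rw [← hPz, hPc, List.cons_append, List.isChain_cons_cons] at hchain
        exact hchain.1
      have := hP p (by simp [hPc])
      simp only [List.map_cons, List.getD_cons_zero]
      omega
  · refine (List.isChain_map _).mpr ((ht.infix ?_).imp fun _ _ h => by omega)
    exact hPz ▸ (List.prefix_append P z).isInfix
  · cases hzc : z with
    | nil => rfl
    | cons c zs =>
      have hne : z ≠ [] := by simp [hzc]
      have := List.head_dropWhile_not (fun x => decide (x ≠ 0)) hne
      simp_all [z]
  · exact ht.infix (hPz ▸ (List.suffix_append P z).isInfix)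
  · rw [catalanJoin, List.map_map, List.map_congr_left (g := id) fun x hx => by
      simp [Nat.sub_add_cancel (Nat.pos_of_ne_zero (hP x hx))], List.map_id, hPz]

def catalanWords : ℕ → Finset (List ℕ)
  | 0 => {[]}
  | n + 1 => (antidiagonal n).attach.biUnion fun ij =>
      (catalanWords ij.1.1 ×ˢ catalanWords ij.1.2).image fun p => catalanJoin p.1 p.2
decreasing_by all_goals have := mem_antidiagonal.mp ij.2; omega

theorem mem_catalanWords {n : ℕ} {w : List ℕ} :
    w ∈ catalanWords n ↔ w.length = n ∧ IsCatalan w := by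
  induction n using Nat.strong_induction_on generalizing w with
  | _ n ih =>
    cases n with
    | zero =>
      rw [catalanWords, mem_singleton, List.length_eq_zero_iff]
      exact ⟨fun h => ⟨h, h ▸ ⟨rfl, List.isChain_nil⟩⟩, And.left⟩
    | succ n =>
      simp only [catalanWords, mem_biUnion, mem_attach, true_and, mem_image, mem_product,
        Subtype.exists, HasAntidiagonal.mem_antidiagonal, Prod.exists]
      constructor
      · rintro ⟨i, j, hij, u, z, ⟨hu, hz⟩, rfl⟩
        rw [ih i (by omega)] at hu
        rw [ih j (by omega)] at hz
        refine ⟨?_, isCatalan_catalanJoin hu.2 hz.2⟩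
        simp [catalanJoin, hu.1, hz.1]
        omega
      · rintro ⟨hlen, hw⟩
        obtain ⟨u, z, hu, hz, rfl⟩ :=
          hw.exists_eq_catalanJoin (List.ne_nil_of_length_eq_add_one hlen)
        have hlen' : u.length + z.length = n := by simpa [catalanJoin] using hlen
        exact ⟨u.length, z.length, hlen', u, z, ⟨(ih _ (by omega)).mpr ⟨rfl, hu⟩,
          (ih _ (by omega)).mpr ⟨rfl, hz⟩⟩, rfl⟩

theorem sum_catalanWords_succ {M : Type*} [AddCommMonoid M] (n : ℕ) (f : List ℕ → M) :
    ∑ w ∈ catalanWords (n + 1), f w =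
      ∑ ij ∈ antidiagonal n, ∑ u ∈ catalanWords ij.1, ∑ z ∈ catalanWords ij.2,
        f (catalanJoin u z) := by
  have hhead : ∀ {k z}, z ∈ catalanWords k → z.getD 0 0 = 0 := fun h =>
    (mem_catalanWords.mp h).2.1
  rw [catalanWords, sum_biUnion, ← sum_attach (antidiagonal n) fun ij =>
    ∑ u ∈ catalanWords ij.1, ∑ z ∈ catalanWords ij.2, f (catalanJoin u z)]
  · refine sum_congr rfl fun ij _ => ?_
    rw [sum_image, sum_product]
    rintro ⟨u, z⟩ hp ⟨u', z'⟩ hq h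
    obtain ⟨rfl, rfl⟩ :=
      catalanJoin_inj (hhead (mem_product.mp hp).2) (hhead (mem_product.mp hq).2) h
    rfl
  · intro ij _ ij' _ hne
    simp only [Function.onFun, disjoint_left, mem_image, mem_product, not_exists, not_and]
    rintro _ ⟨⟨u, z⟩, ⟨hu, hz⟩, rfl⟩ ⟨u', z'⟩ ⟨hu', hz'⟩ h
    obtain ⟨rfl, rfl⟩ := catalanJoin_inj (hhead hz') (hhead hz) h
    refine hne (Subtype.ext (Prod.ext ?_ ?_))
    · rw [← (mem_catalanWords.mp hu).1, (mem_catalanWords.mp hu').1]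
    · rw [← (mem_catalanWords.mp hz).1, (mem_catalanWords.mp hz').1]

theorem card_catalanWords (n : ℕ) : #(catalanWords n) = catalan n := by
  induction n using Nat.strong_induction_on with
  | _ n ih =>
    cases n with
    | zero => simp [catalanWords]
    | succ n =>
      rw [card_eq_sum_ones, sum_catalanWords_succ, catalan_succ']
      refine sum_congr rfl fun ij hij => ?_
      have := mem_antidiagonal.mp hij
      simp only [sum_const, smul_eq_mul, mul_one, ih ij.1 (by omega), ih ij.2 (by omega)]

theorem sum_ascRuns_catalanWords_succ_add_catalan (n : ℕ) :
    ∑ w ∈ catalanWords (n + 1), ascRuns w + catalan n =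
      ∑ ij ∈ antidiagonal n,
        ((∑ u ∈ catalanWords ij.1, ascRuns u) * catalan ij.2 +
          catalan ij.1 * ∑ z ∈ catalanWords ij.2, ascRuns z) := by
  have hnil : ∑ ij ∈ antidiagonal n, ∑ u ∈ catalanWords ij.1, ∑ z ∈ catalanWords ij.2,
      (if z = [] then 1 else 0) = catalan n := by
    have hj : ∀ j,
        ∑ z ∈ catalanWords j, (if z = [] then 1 else 0) = if j = 0 then 1 else 0 := fun j => by
      simp [sum_ite_eq', mem_catalanWords, IsCatalan, eq_comm]
    simp only [hj, sum_const, card_catalanWords, smul_eq_mul, mul_ite, mul_one, mul_zero]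
    exact sum_antidiagonal_ite_snd_eq_zero catalan n
  rw [sum_catalanWords_succ, ← hnil, ← sum_add_distrib]
  refine sum_congr rfl fun ij _ => ?_
  calc _ = ∑ u ∈ catalanWords ij.1, ∑ z ∈ catalanWords ij.2, (ascRuns u + ascRuns z) := by
        rw [← sum_add_distrib]
        refine sum_congr rfl fun u _ => ?_
        rw [← sum_add_distrib]
        exact sum_congr rfl fun z hz => ascRuns_catalanJoin_add u (mem_catalanWords.mp hz).2.1
    _ = _ := by
        simp only [sum_add_distrib, sum_const, card_catalanWords, smul_eq_mul, sum_mul]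
        simp only [mul_comm]

theorem total_ascRuns_general (n : ℕ) :
    ∑ᶠ w ∈ CatalanWord n, ascRuns w = Nat.choose (2 * n - 1) n := by
  have hset : CatalanWord n = catalanWords n := by
    ext w
    rw [mem_coe, mem_catalanWords, mem_catalanWord_iff]
  rw [hset, finsum_mem_coe_finset]
  exact eq_choose_two_mul_sub_one_of_succ_add_catalan
    (a := fun n => ∑ w ∈ catalanWords n, ascRuns w) (by simp [catalanWords])
    sum_ascRuns_catalanWords_succ_add_catalan n

/-- The total number of runs of ascents over all Catalan words of length `n` is
`C(2n-1, n)`. -/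
theorem total_ascRuns (n : ℕ) (hn : 1 ≤ n) :
    ∑ᶠ w ∈ CatalanWord n, ascRuns w = Nat.choose (2 * n - 1) n :=
  total_ascRuns_general n
end

section
/- For every integer n ≥ 1, the n-th Catalan number satisfies the identity n · c_n = Σ_{k=1}^{⌊(n+1)/2⌋} C(n,k) · C(n-k, k-1) · 2^{n-2k+1}, where c_n = (1/(n+1))·C(2n,n). -/
/-!
Both sides equal `C(2n, n+1)`: on the left because `(n+1) c_n = C(2n, n)`, on the right because
`(1 + X)^(2n) = (X^2 + (1 + 2X))^n`, and choosing `X^2` from `k` of the `n` factors leaves the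
coefficient `C(n-k, n+1-2k) 2^(n+1-2k) = C(n-k, k-1) 2^(n+1-2k)` of `X^(n+1-2k)` in
`(1 + 2X)^(n-k)`.
-/

open Polynomial Finset

theorem mul_catalan_eq_choose (n : ℕ) : n * catalan n = (2 * n).choose (n + 1) := by
  refine Nat.eq_of_mul_eq_mul_left n.succ_pos ?_
  calc (n + 1) * (n * catalan n) = n * n.centralBinom := by
        rw [← succ_mul_catalan_eq_centralBinom]; ring
    _ = (n + 1) * (2 * n).choose (n + 1) := by
        rw [Nat.centralBinom_eq_two_mul_choose, mul_comm (n + 1),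
          Nat.choose_succ_right_eq, two_mul, Nat.add_sub_cancel, mul_comm]

theorem coeff_one_add_C_mul_X_pow {R : Type*} [CommSemiring R] (a : R) (m j : ℕ) :
    ((1 + C a * X) ^ m).coeff j = a ^ j * m.choose j := by
  rw [add_comm, add_pow, finsetSum_coeff]
  simp only [one_pow, mul_one, mul_pow, ← C_pow, ← C_eq_natCast, mul_assoc, coeff_C_mul,
    mul_comm (X ^ _)]
  simp +contextual [Nat.choose_eq_zero_of_lt]

theorem sum_choose_mul_choose_mul_two_pow (n : ℕ) :
    ∑ k ∈ Icc 1 ((n + 1) / 2), n.choose k * (n - k).choose (k - 1) * 2 ^ (n + 1 - 2 * k) =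
      (2 * n).choose (n + 1) := by
  have hsq : (1 + X : ℕ[X]) ^ 2 = X ^ 2 + (1 + C 2 * X) := by
    rw [map_ofNat]; ring
  have hterm (k : ℕ) :
      ((X ^ 2) ^ k * (1 + C 2 * X) ^ (n - k) * (n.choose k : ℕ[X])).coeff (n + 1) =
        if 2 * k ≤ n + 1 then
          n.choose k * (n - k).choose (n + 1 - 2 * k) * 2 ^ (n + 1 - 2 * k)
        else 0 := by
    rw [← C_eq_natCast, coeff_mul_C, ← pow_mul, coeff_X_pow_mul', coeff_one_add_C_mul_X_pow]
    split_ifs <;> simp only [Nat.cast_id] <;> ring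
  have hcoeff := coeff_one_add_X_pow ℕ (2 * n) (n + 1)
  rw [Nat.cast_id] at hcoeff
  rw [← hcoeff, pow_mul, hsq, add_pow, finsetSum_coeff]
  simp only [hterm]
  apply sum_subset_zero_on_sdiff
  · intro k hk
    simp only [mem_Icc, mem_range] at hk ⊢
    omega
  · intro k hk
    simp only [mem_sdiff, mem_Icc, mem_range] at hk
    split_ifs
    · obtain rfl : k = 0 := by omega
      simp
    · rfl
  · intro k hk
    simp only [mem_Icc] at hk
    rw [if_pos (by omega), Nat.choose_symm_of_eq_add (by omega : n - k = n + 1 - 2 * k + (k - 1))]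

theorem catalan_binomial_identity_general (n : ℕ) :
    n * catalan n =
      ∑ k ∈ Finset.Icc 1 ((n + 1) / 2),
        Nat.choose n k * Nat.choose (n - k) (k - 1) * 2 ^ (n + 1 - 2 * k) := by
  rw [mul_catalan_eq_choose, sum_choose_mul_choose_mul_two_pow]

/-- The identity `n·c_n = Σ_{k=1}^{⌊(n+1)/2⌋} C(n,k) C(n-k,k-1) 2^(n-2k+1)`, where
`c_n` is the `n`-th Catalan number. -/
theorem catalan_binomial_identity (n : ℕ) (hn : 1 ≤ n) :
    n * catalan n =
      ∑ k ∈ Finset.Icc 1 ((n + 1) / 2),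
        Nat.choose n k * Nat.choose (n - k) (k - 1) * 2 ^ (n + 1 - 2 * k) :=
  catalan_binomial_identity_general n
end

section
/- For all integers n ≥ 1, the total number of runs of weak ascents over all Catalan words of length n equals the central binomial coefficient C(2n-2, n-1); that is, Σ_{w ∈ C_n} wruns(w) = C(2n-2, n-1). -/
/-- Number of runs of weak ascents of `w`: `1 + #{i : w i > w (i+1)}`. -/
def wAscRuns (w : List ℕ) : ℕ :=
  1 + ((Finset.range (w.length - 1)).filter
    (fun i => w.getD (i + 1) 0 < w.getD i 0)).card

namespace TW

def TN (n k : ℕ) : ℤ := ((2*n-k-1).choose n : ℤ) - ((2*n-k-1).choose (n+1) : ℤ)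
def TD (n k : ℕ) : ℤ := (k+1) * ((2*n-k-3).choose n : ℤ) + ((2*n-k-3).choose (n+1) : ℤ)
def TS (n k : ℕ) : ℤ := TN n k + TD n k
def Ncl (n k : ℕ) : ℤ := if k < n then ((2*n-k-2).choose (n-1) : ℤ) - ((2*n-k-2).choose n : ℤ) else 0
def Dcl (n k : ℕ) : ℤ := if k+3 ≤ n then (k+1) * ((2*n-k-4).choose (n-1) : ℤ) else 0
def Scl (n k : ℕ) : ℤ := Ncl n k + Dcl n k

lemma pascal (a b : ℕ) : ((a+1).choose (b+1) : ℤ) = a.choose b + a.choose (b+1) := by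
  exact_mod_cast Nat.choose_succ_succ a b

lemma TN_zero {n k : ℕ} (hn : 1 ≤ n) (h : n ≤ k) : TN n k = 0 := by
  have h1 : 2*n-k-1 < n := by omega
  have h2 : 2*n-k-1 < n+1 := by omega
  simp [TN, Nat.choose_eq_zero_of_lt h1, Nat.choose_eq_zero_of_lt h2]

lemma TD_zero {n k : ℕ} (hn : 1 ≤ n) (h : n ≤ k + 2) : TD n k = 0 := by
  have h1 : 2*n-k-3 < n := by omega
  have h2 : 2*n-k-3 < n+1 := by omega
  simp [TD, Nat.choose_eq_zero_of_lt h1, Nat.choose_eq_zero_of_lt h2]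

lemma TS_zero {n k : ℕ} (hn : 1 ≤ n) (h : n ≤ k) : TS n k = 0 := by
  rw [TS, TN_zero hn h, TD_zero hn (by omega)]; ring

lemma TN_step {n k : ℕ} (hn : 1 ≤ n) (h : k < n) : TN n k = Ncl n k + TN n (k+1) := by
  obtain ⟨b, rfl⟩ : ∃ b, n = b + 1 := ⟨n-1, by omega⟩
  have h1 : 2*(b+1)-k-1 = (2*(b+1)-k-2) + 1 := by omega
  have h2 : 2*(b+1)-(k+1)-1 = 2*(b+1)-k-2 := by omega
  have h3 : b+1-1 = b := rfl
  rw [TN, TN, Ncl, if_pos h, h1, h2, h3]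
  rw [pascal (2*(b+1)-k-2) b, pascal (2*(b+1)-k-2) (b+1)]
  push_cast; ring

lemma TD_step {n k : ℕ} (hn : 1 ≤ n) (h : k < n) : TD n k = Dcl n k + TD n (k+1) := by
  by_cases h3 : k + 3 ≤ n
  · obtain ⟨b, rfl⟩ : ∃ b, n = b + 1 := ⟨n-1, by omega⟩
    have e1 : 2*(b+1)-k-3 = (2*(b+1)-k-4) + 1 := by omega
    have e2 : 2*(b+1)-(k+1)-3 = 2*(b+1)-k-4 := by omega
    have e3 : b+1-1 = b := rfl
    rw [TD, TD, Dcl, if_pos h3, e1, e2, e3]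
    rw [pascal (2*(b+1)-k-4) b, pascal (2*(b+1)-k-4) (b+1)]
    push_cast; ring
  · rw [TD_zero hn (by omega), TD_zero hn (by omega), Dcl, if_neg h3]; ring

lemma TS_step {n k : ℕ} (hn : 1 ≤ n) (h : k < n) : TS n k = Scl n k + TS n (k+1) := by
  rw [TS, TS, TN_step hn h, TD_step hn h, Scl]; ring

lemma Ncl_succ (n k : ℕ) (hn : 1 ≤ n) : Ncl (n+1) k = TN n (k-1) := by
  rcases Nat.lt_or_ge k 1 with hk | hk
  · interval_cases k
    obtain ⟨b, rfl⟩ : ∃ b, n = b + 1 := ⟨n-1, by omega⟩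
    have e1 : 2*(b+1+1)-0-2 = (2*(b+1)-0-1) + 1 := by omega
    have e2 : (0:ℕ)-1 = 0 := rfl
    have e3 : b+1+1-1 = b+1 := rfl
    rw [Ncl, if_pos (by omega), TN, e1, e2, e3]
    rw [pascal (2*(b+1)-0-1) b, pascal (2*(b+1)-0-1) (b+1)]
    have hsym : (2*(b+1)-0-1).choose b = (2*(b+1)-0-1).choose (b+1) := by
      have := Nat.choose_symm (n := 2*(b+1)-0-1) (k := b) (by omega)
      rw [show 2*(b+1)-0-1-b = b+1 by omega] at this
      omega
    push_cast [hsym]; ring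
  · rcases Nat.lt_or_ge k (n+1) with hk2 | hk2
    · have e1 : 2*(n+1)-k-2 = 2*n-(k-1)-1 := by omega
      have e2 : n+1-1 = n := rfl
      rw [Ncl, if_pos hk2, TN, e1, e2]
    · rw [Ncl, if_neg (by omega), TN_zero hn (by omega)]

lemma Dcl_succ (n k : ℕ) (hn : 1 ≤ n) : Dcl (n+1) k = TD n (k-1) + TN n (k+1) := by
  rcases Nat.lt_or_ge k 1 with hk | hk
  · interval_cases k
    rcases Nat.lt_or_ge n 2 with hn2 | hn2
    · interval_cases n
      norm_num [Dcl, TD, TN]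
    · obtain ⟨c, rfl⟩ : ∃ c, n = c + 2 := ⟨n-2, by omega⟩
      have e0 : (0:ℕ)-1 = 0 := rfl
      have e1 : 2*(c+2+1)-0-4 = 2*(c+2)-0-2 := by omega
      have e2 : 2*(c+2)-0-3 = (2*(c+2)-0-4)+1 := by omega
      have e3 : 2*(c+2)-(0+1)-1 = ((2*(c+2)-0-4)+1) + 1 := by omega
      have e4 : c+2+1-1 = c+2 := rfl
      rw [Dcl, if_pos (by omega), TD, TN, e0, e1, e2, e3, e4]
      rw [show 2*(c+2)-0-2 = ((2*(c+2)-0-4)+1)+1 by omega]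
      rw [pascal ((2*(c+2)-0-4)+1) (c+1+1), pascal (2*(c+2)-0-4) (c+1+1)]
      push_cast; ring
  · by_cases h3 : k + 3 ≤ n + 1
    · have e1 : 2*(n+1)-k-4 = 2*n-k-2 := by omega
      have e2 : 2*n-(k-1)-3 = 2*n-k-2 := by omega
      have e3 : 2*n-(k+1)-1 = 2*n-k-2 := by omega
      have e4 : n+1-1 = n := rfl
      have e5 : (k-1) + 1 = k := by omega
      rw [Dcl, if_pos h3, TD, TN, e1, e2, e3, e4]
      rw [Nat.cast_sub hk]; push_cast; ring
    · rw [Dcl, if_neg h3, TD_zero hn (by omega), TN_zero hn (by omega)]; ring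

lemma Scl_succ (n k : ℕ) (hn : 1 ≤ n) : Scl (n+1) k = TS n (k-1) + TN n (k+1) := by
  rw [Scl, Ncl_succ n k hn, Dcl_succ n k hn, TS]; ring

lemma TS_zero_eq (n : ℕ) (hn : 1 ≤ n) : TS n 0 = ((2*n-2).choose (n-1) : ℤ) := by
  rcases Nat.lt_or_ge n 2 with hn2 | hn2
  · interval_cases n; norm_num [TS, TN, TD]
  · obtain ⟨b, rfl⟩ : ∃ b, n = b + 2 := ⟨n-2, by omega⟩
    have e1 : 2*(b+2)-0-1 = ((2*(b+2)-0-3)+1)+1 := by omega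
    have e2 : 2*(b+2)-2 = (2*(b+2)-0-3)+1 := by omega
    have e3 : b+2-1 = b+1 := rfl
    rw [TS, TN, TD, e1, e2, e3]
    rw [pascal ((2*(b+2)-0-3)+1) (b+1), pascal ((2*(b+2)-0-3)+1) (b+1+1),
        pascal (2*(b+2)-0-3) (b+1+1)]
    push_cast; ring


def lastL (w : List ℕ) : ℕ := w.getD (w.length - 1) 0

def CF : ℕ → Finset (List ℕ)
  | 0 => ∅
  | 1 => {[0]}
  | (n+2) => (CF (n+1)).biUnion
      (fun w => (Finset.range (lastL w + 2)).image (fun j => w ++ [j]))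

lemma lastL_append (u : List ℕ) (j : ℕ) : lastL (u ++ [j]) = j := by
  unfold lastL
  rw [List.length_append, List.length_singleton, Nat.add_sub_cancel,
    List.getD_append_right u [j] 0 u.length le_rfl, Nat.sub_self]
  rfl

lemma mem_CF_length : ∀ n, ∀ w ∈ CF n, w.length = n
  | 0, w, h => by simp [CF] at h
  | 1, w, h => by simp [CF] at h; subst h; rfl
  | (n+2), w, h => by
    simp only [CF, Finset.mem_biUnion, Finset.mem_image, Finset.mem_range] at h
    obtain ⟨u, hu, j, _, rfl⟩ := h
    simp [mem_CF_length (n+1) u hu]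

lemma mem_CF_lastL : ∀ n, ∀ w ∈ CF n, lastL w < n
  | 0, w, h => by simp [CF] at h
  | 1, w, h => by simp [CF] at h; subst h; simp [lastL]
  | (n+2), w, h => by
    simp only [CF, Finset.mem_biUnion, Finset.mem_image, Finset.mem_range] at h
    obtain ⟨u, hu, j, hj, rfl⟩ := h
    have := mem_CF_lastL (n+1) u hu
    rw [lastL_append]; omega

lemma sum_CF (n : ℕ) {M : Type*} [AddCommMonoid M] (f : List ℕ → M) :
    ∑ w ∈ CF (n+2), f w
      = ∑ w ∈ CF (n+1), ∑ j ∈ Finset.range (lastL w + 2), f (w ++ [j]) := by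
  show ∑ w ∈ (CF (n+1)).biUnion _, f w = _
  rw [Finset.sum_biUnion]
  · refine Finset.sum_congr rfl fun w hw => ?_
    rw [Finset.sum_image]
    intro a _ b _ hab
    have := List.append_inj_right hab rfl
    simpa using this
  · intro a ha b hb hab
    simp only [Finset.disjoint_left, Finset.mem_image, Finset.mem_range]
    rintro x ⟨j, _, rfl⟩ ⟨j', _, h⟩
    have hlen : a.length = b.length := by
      rw [mem_CF_length (n+1) a ha, mem_CF_length (n+1) b hb]
    exact hab (List.append_inj_left h.symm hlen)

lemma wAscRuns_append (w : List ℕ) (hw : w ≠ []) (j : ℕ) :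
    wAscRuns (w ++ [j]) = wAscRuns w + if j < lastL w then 1 else 0 := by
  obtain ⟨l, hl⟩ : ∃ l, w.length = l + 1 :=
    ⟨w.length - 1, (Nat.succ_pred_eq_of_pos (List.length_pos_iff.2 hw)).symm⟩
  have h1 : (w ++ [j]).getD (l+1) 0 = j := by
    rw [show l + 1 = w.length + 0 by omega, List.getD_append_right w [j] 0 _ (by omega)]
    simp
  have h2 : (w ++ [j]).getD l 0 = lastL w := by
    rw [List.getD_append w [j] 0 l (by omega)]
    unfold lastL; rw [hl]; rfl
  unfold wAscRuns
  rw [List.length_append, List.length_singleton, hl]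
  rw [show l + 1 + 1 - 1 = l + 1 by rfl, show l + 1 - 1 = l by rfl]
  rw [Finset.range_add_one, Finset.filter_insert]
  have h3 : (Finset.range l).filter (fun i => (w ++ [j]).getD (i+1) 0 < (w ++ [j]).getD i 0)
      = (Finset.range l).filter (fun i => w.getD (i+1) 0 < w.getD i 0) := by
    refine Finset.filter_congr fun i hi => ?_
    rw [Finset.mem_range] at hi
    rw [List.getD_append w [j] 0 i (by omega), List.getD_append w [j] 0 (i+1) (by omega)]
  rw [h3]
  by_cases hc : (w ++ [j]).getD (l+1) 0 < (w ++ [j]).getD l 0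
  · rw [if_pos hc, Finset.card_insert_of_notMem (by simp), if_pos (by rw [h1, h2] at hc; exact hc)]
    omega
  · rw [if_neg hc, if_neg (by rw [h1, h2] at hc; exact hc)]
    omega

lemma getD_append_last (u : List ℕ) (j : ℕ) : (u ++ [j]).getD u.length 0 = j := by
  rw [List.getD_append_right u [j] 0 u.length le_rfl, Nat.sub_self]
  rfl

lemma mem_CF : ∀ n, 1 ≤ n → ∀ w, w ∈ CF n ↔ w ∈ CatalanWord n := by
  intro n hn
  induction n with
  | zero => omega
  | succ m ih =>
    rcases Nat.eq_or_lt_of_le hn with h1 | h1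
    · -- m + 1 = 1
      intro w
      obtain rfl : m = 0 := by omega
      simp only [CF, Finset.mem_singleton, CatalanWord, Set.mem_setOf_eq]
      constructor
      · rintro rfl; refine ⟨rfl, rfl, fun i hi => by omega⟩
      · rintro ⟨hlen, h0, _⟩
        obtain ⟨a, rfl⟩ := List.length_eq_one_iff.1 hlen
        have ha : a = 0 := by simpa using h0
        simp [ha]
    · -- m ≥ 1, prove for m+1 ≥ 2
      obtain ⟨p, rfl⟩ : ∃ p, m = p + 1 := ⟨m - 1, by omega⟩
      intro w
      have hrec : w ∈ CF (p+2) ↔ ∃ u ∈ CF (p+1), ∃ j < lastL u + 2, u ++ [j] = w := by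
        simp only [CF, Finset.mem_biUnion, Finset.mem_image, Finset.mem_range]
      rw [hrec]
      constructor
      · rintro ⟨u, hu, j, hj, rfl⟩
        rw [ih (by omega) u] at hu
        obtain ⟨hlen, h0, hcond⟩ := hu
        have hL : lastL u = u.getD p 0 := by unfold lastL; rw [hlen, Nat.add_sub_cancel]
        refine ⟨by simp [hlen], ?_, ?_⟩
        · rw [List.getD_append u [j] 0 0 (by omega)]; exact h0
        · intro i hi
          rcases Nat.lt_or_ge (i+1) (p+1) with h2 | h2
          · rw [List.getD_append u [j] 0 (i+1) (by omega),
              List.getD_append u [j] 0 i (by omega)]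
            exact hcond i h2
          · have hip : i = p := by omega
            subst hip
            rw [show i + 1 = u.length by omega, getD_append_last,
              List.getD_append u [j] 0 i (by omega)]
            rw [hL] at hj
            omega
      · rintro ⟨hlen, h0, hcond⟩
        have hne : w ≠ [] := by intro h; rw [h] at hlen; simp at hlen
        obtain ⟨u, a, rfl⟩ : ∃ u a, w = u ++ [a] := by
          refine ⟨w.dropLast, w.getLast hne, ?_⟩
          rw [List.dropLast_append_getLast hne]
        have hulen : u.length = p + 1 := by
          rw [List.length_append, List.length_singleton] at hlen; omega
        have hgets : ∀ i, i < p + 1 → (u ++ [a]).getD i 0 = u.getD i 0 := fun i hi =>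
          List.getD_append u [a] 0 i (by omega)
        have hgeta : (u ++ [a]).getD (p+1) 0 = a := by
          rw [show p + 1 = u.length by omega, getD_append_last]
        have hL : lastL u = u.getD p 0 := by unfold lastL; rw [hulen, Nat.add_sub_cancel]
        refine ⟨u, ?_, a, ?_, rfl⟩
        · rw [ih (by omega) u]
          refine ⟨hulen, ?_, ?_⟩
          · rw [← hgets 0 (by omega)]; exact h0
          · intro i hi
            rw [← hgets (i+1) (by omega), ← hgets i (by omega)]
            exact hcond i (by omega)
        · have := hcond p (by omega)
          rw [hgeta, hgets p (by omega)] at this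
          rw [hL]; omega


lemma sum_Ico_Ncl (n : ℕ) (hn : 1 ≤ n) (m : ℕ) :
    (∑ j ∈ Finset.Ico m n, Ncl n j) = TN n m := by
  suffices H : ∀ d m, n - m = d → (∑ j ∈ Finset.Ico m n, Ncl n j) = TN n m from H (n-m) m rfl
  intro d
  induction d with
  | zero =>
    intro m hm
    rw [Finset.Ico_eq_empty (by omega), Finset.sum_empty, TN_zero hn (by omega)]
  | succ d ih =>
    intro m hm
    rw [Finset.sum_eq_sum_Ico_succ_bot (by omega : m < n), ih (m+1) (by omega),
      ← TN_step hn (by omega)]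

lemma sum_Ico_Scl (n : ℕ) (hn : 1 ≤ n) (m : ℕ) :
    (∑ j ∈ Finset.Ico m n, Scl n j) = TS n m := by
  suffices H : ∀ d m, n - m = d → (∑ j ∈ Finset.Ico m n, Scl n j) = TS n m from H (n-m) m rfl
  intro d
  induction d with
  | zero =>
    intro m hm
    rw [Finset.Ico_eq_empty (by omega), Finset.sum_empty, TS_zero hn (by omega)]
  | succ d ih =>
    intro m hm
    rw [Finset.sum_eq_sum_Ico_succ_bot (by omega : m < n), ih (m+1) (by omega),
      ← TS_step hn (by omega)]

def cnt (n k : ℕ) : ℤ := ∑ w ∈ CF n, if lastL w = k then 1 else 0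
def scnt (n k : ℕ) : ℤ := ∑ w ∈ CF n, if lastL w = k then (wAscRuns w : ℤ) else 0

lemma main : ∀ n, 1 ≤ n → ∀ k, cnt n k = Ncl n k ∧ scnt n k = Scl n k := by
  intro n hn
  induction n with
  | zero => omega
  | succ m ih =>
    rcases Nat.eq_or_lt_of_le hn with h1 | h1
    · obtain rfl : m = 0 := by omega
      intro k
      have hruns : wAscRuns [0] = 1 := rfl
      constructor
      · rw [cnt, show CF 1 = ({[0]} : Finset (List ℕ)) from rfl, Finset.sum_singleton,
            show lastL [0] = 0 from rfl, Ncl]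
        rcases Nat.eq_zero_or_pos k with rfl | hk
        · rw [if_pos rfl, if_pos (by omega)]
          norm_num
        · rw [if_neg (by omega), if_neg (by omega)]
      · rw [scnt, show CF 1 = ({[0]} : Finset (List ℕ)) from rfl, Finset.sum_singleton,
            show lastL [0] = 0 from rfl, hruns, Scl, Ncl, Dcl]
        rcases Nat.eq_zero_or_pos k with rfl | hk
        · rw [if_pos rfl, if_pos (by omega), if_neg (by omega)]
          norm_num
        · rw [if_neg (by omega), if_neg (by omega), if_neg (by omega)]
          norm_num
    · obtain ⟨p, rfl⟩ : ∃ p, m = p + 1 := ⟨m - 1, by omega⟩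
      have hp : 1 ≤ p + 1 := by omega
      have IH := ih hp
      intro k
      have hlastlt : ∀ w ∈ CF (p+1), lastL w < p+1 := mem_CF_lastL (p+1)
      have hnempty : ∀ w ∈ CF (p+1), w ≠ [] := by
        intro w hw h
        have := mem_CF_length (p+1) w hw
        rw [h] at this
        simp at this
      constructor
      · have step1 : ∀ w ∈ CF (p+1),
            (∑ j ∈ Finset.range (lastL w + 2), if lastL (w ++ [j]) = k then (1:ℤ) else 0)
              = ∑ j ∈ Finset.Ico (k-1) (p+1), (if lastL w = j then (1:ℤ) else 0) := by
          intro w hw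
          have hL := hlastlt w hw
          calc (∑ j ∈ Finset.range (lastL w + 2), if lastL (w ++ [j]) = k then (1:ℤ) else 0)
              = ∑ j ∈ Finset.range (lastL w + 2), if j = k then (1:ℤ) else 0 := by
                simp only [lastL_append]
            _ = if k ∈ Finset.range (lastL w + 2) then (1:ℤ) else 0 :=
                Finset.sum_ite_eq' _ _ _
            _ = if lastL w ∈ Finset.Ico (k-1) (p+1) then (1:ℤ) else 0 := by
                simp only [Finset.mem_range, Finset.mem_Ico]
                exact if_congr (by omega) rfl rfl
            _ = ∑ j ∈ Finset.Ico (k-1) (p+1), (if lastL w = j then (1:ℤ) else 0) :=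
                (Finset.sum_ite_eq (Finset.Ico (k-1) (p+1)) (lastL w) (fun _ => (1:ℤ))).symm
        calc cnt (p+2) k
            = ∑ w ∈ CF (p+1), ∑ j ∈ Finset.range (lastL w + 2),
                (if lastL (w ++ [j]) = k then (1:ℤ) else 0) := sum_CF (p) _
          _ = ∑ w ∈ CF (p+1), ∑ j ∈ Finset.Ico (k-1) (p+1),
                (if lastL w = j then (1:ℤ) else 0) := Finset.sum_congr rfl step1
          _ = ∑ j ∈ Finset.Ico (k-1) (p+1), cnt (p+1) j := Finset.sum_comm
          _ = ∑ j ∈ Finset.Ico (k-1) (p+1), Ncl (p+1) j :=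
                Finset.sum_congr rfl fun j _ => (IH j).1
          _ = TN (p+1) (k-1) := sum_Ico_Ncl (p+1) hp _
          _ = Ncl (p+2) k := (Ncl_succ (p+1) k hp).symm
      · have ecast : ∀ w ∈ CF (p+1), ∀ j : ℕ,
            ((wAscRuns (w ++ [j]) : ℤ))
              = (wAscRuns w : ℤ) + (if j < lastL w then 1 else 0) := by
          intro w hw j
          rw [wAscRuns_append w (hnempty w hw) j]
          push_cast
          ring
        have key : ∀ w ∈ CF (p+1),
            (∑ j ∈ Finset.range (lastL w + 2),
                if lastL (w ++ [j]) = k then ((wAscRuns (w ++ [j]) : ℤ)) else 0)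
            = (∑ j ∈ Finset.Ico (k-1) (p+1), if lastL w = j then (wAscRuns w : ℤ) else 0)
              + (∑ j ∈ Finset.Ico (k+1) (p+1), if lastL w = j then (1:ℤ) else 0) := by
          intro w hw
          have hL := hlastlt w hw
          calc (∑ j ∈ Finset.range (lastL w + 2),
                if lastL (w ++ [j]) = k then ((wAscRuns (w ++ [j]) : ℤ)) else 0)
              = ∑ j ∈ Finset.range (lastL w + 2),
                (if j = k then ((wAscRuns w : ℤ) + if j < lastL w then 1 else 0) else 0) := by
                refine Finset.sum_congr rfl fun j hj => ?_
                rw [lastL_append, ecast w hw j]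
            _ = if k ∈ Finset.range (lastL w + 2) then
                  ((wAscRuns w : ℤ) + if k < lastL w then 1 else 0) else 0 :=
                Finset.sum_ite_eq' _ _ _
            _ = (if lastL w ∈ Finset.Ico (k-1) (p+1) then (wAscRuns w : ℤ) else 0)
                + (if lastL w ∈ Finset.Ico (k+1) (p+1) then (1:ℤ) else 0) := by
                simp only [Finset.mem_range, Finset.mem_Ico]
                split_ifs
                all_goals try ring
                all_goals exfalso; omega
            _ = _ := by rw [Finset.sum_ite_eq, Finset.sum_ite_eq]
        calc scnt (p+2) k
            = ∑ w ∈ CF (p+1), ∑ j ∈ Finset.range (lastL w + 2),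
                (if lastL (w ++ [j]) = k then ((wAscRuns (w ++ [j]) : ℤ)) else 0) := sum_CF p _
          _ = ∑ w ∈ CF (p+1),
                ((∑ j ∈ Finset.Ico (k-1) (p+1), if lastL w = j then (wAscRuns w : ℤ) else 0)
                + (∑ j ∈ Finset.Ico (k+1) (p+1), if lastL w = j then (1:ℤ) else 0)) :=
                Finset.sum_congr rfl key
          _ = (∑ w ∈ CF (p+1), ∑ j ∈ Finset.Ico (k-1) (p+1),
                  if lastL w = j then (wAscRuns w : ℤ) else 0)
              + (∑ w ∈ CF (p+1), ∑ j ∈ Finset.Ico (k+1) (p+1),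
                  if lastL w = j then (1:ℤ) else 0) := Finset.sum_add_distrib
          _ = (∑ j ∈ Finset.Ico (k-1) (p+1), scnt (p+1) j)
              + (∑ j ∈ Finset.Ico (k+1) (p+1), cnt (p+1) j) := by
                rw [Finset.sum_comm (s := CF (p+1)), Finset.sum_comm (s := CF (p+1))]
                rfl
          _ = (∑ j ∈ Finset.Ico (k-1) (p+1), Scl (p+1) j)
              + (∑ j ∈ Finset.Ico (k+1) (p+1), Ncl (p+1) j) := by
                rw [Finset.sum_congr rfl fun j _ => (IH j).2,
                  Finset.sum_congr rfl fun j _ => (IH j).1]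
          _ = TS (p+1) (k-1) + TN (p+1) (k+1) := by
                rw [sum_Ico_Scl (p+1) hp, sum_Ico_Ncl (p+1) hp]
          _ = Scl (p+2) k := (Scl_succ (p+1) k hp).symm

end TW

/-- The total number of runs of weak ascents over all Catalan words of length `n` is
the central binomial coefficient `C(2n-2, n-1)`. -/
theorem total_wAscRuns (n : ℕ) (hn : 1 ≤ n) :
    ∑ᶠ w ∈ CatalanWord n, wAscRuns w = Nat.choose (2 * n - 2) (n - 1) := by
  have hset : CatalanWord n = ↑(TW.CF n) := by
    ext w
    rw [Finset.mem_coe]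
    exact ((TW.mem_CF n hn w).symm)
  rw [hset, finsum_mem_coe_finset]
  have hZ : (∑ w ∈ TW.CF n, (wAscRuns w : ℤ)) = ((2*n-2).choose (n-1) : ℤ) := by
    have hmain := TW.main n hn
    have e : ∀ w ∈ TW.CF n, (wAscRuns w : ℤ)
        = ∑ j ∈ Finset.Ico 0 n, (if TW.lastL w = j then (wAscRuns w : ℤ) else 0) := by
      intro w hw
      rw [Finset.sum_ite_eq, if_pos (Finset.mem_Ico.2 ⟨Nat.zero_le _, TW.mem_CF_lastL n w hw⟩)]
    calc (∑ w ∈ TW.CF n, (wAscRuns w : ℤ))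
        = ∑ w ∈ TW.CF n, ∑ j ∈ Finset.Ico 0 n,
            (if TW.lastL w = j then (wAscRuns w : ℤ) else 0) := Finset.sum_congr rfl e
      _ = ∑ j ∈ Finset.Ico 0 n, TW.scnt n j := Finset.sum_comm
      _ = ∑ j ∈ Finset.Ico 0 n, TW.Scl n j := Finset.sum_congr rfl fun j _ => (hmain j).2
      _ = TW.TS n 0 := TW.sum_Ico_Scl n hn 0
      _ = ((2*n-2).choose (n-1) : ℤ) := TW.TS_zero_eq n hn
  exact_mod_cast hZ
end

section
/- For all integers n ≥ 1, the total number of runs of descents over all Catalan words of length n equals C(2n, n) − C(2n-2, n-1); that is, Σ_{w ∈ C_n} r̄uns(w) = C(2n,n) − C(2n-2,n-1). -/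
/-- Number of runs of descents of `w`: `1 + #{i : w i ≤ w (i+1)}`. -/
def descRuns (w : List ℕ) : ℕ :=
  1 + ((Finset.range (w.length - 1)).filter
    (fun i => w.getD i 0 ≤ w.getD (i + 1) 0)).card

open Finset

def cwF (n k : ℕ) : ℤ :=
  if k ≤ n then ((2 * n - k).choose n : ℤ) - ((2 * n - k).choose (n + 1) : ℤ) else 0

def cwS : ℕ → ℕ → ℤ
  | 0, k => cwF 0 k
  | n + 1, k => (n + 2) * cwF (n + 1) k - ((n : ℤ) - k) * cwF n k

lemma cwF_eq {n k : ℕ} (h : k ≤ 2 * n) :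
    cwF n k = ((2 * n - k).choose n : ℤ) - ((2 * n - k).choose (n + 1) : ℤ) := by
  unfold cwF
  split_ifs with h'
  · rfl
  · rw [Nat.choose_eq_zero_of_lt (by omega), Nat.choose_eq_zero_of_lt (by omega)]
    simp

lemma pascal' {a b a' b' : ℕ} (ha : a = a' + 1) (hb : b = b' + 1) :
    a.choose b = a'.choose b' + a'.choose b := by
  subst ha; subst hb; exact Nat.choose_succ_succ _ _

lemma cwF_absorb (n k : ℕ) :
    ((n : ℤ) - k) * cwF n k
      = n * ((2 * n - k).choose (n + 1) : ℤ) - (n + 2) * ((2 * n - k).choose (n + 2) : ℤ) := by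
  by_cases hk : k ≤ n
  · rcases eq_or_lt_of_le hk with rfl | hlt
    · rw [show 2 * k - k = k from by omega,
        Nat.choose_eq_zero_of_lt (show k < k + 1 from by omega),
        Nat.choose_eq_zero_of_lt (show k < k + 2 from by omega)]
      push_cast; ring
    · have h1 := Nat.choose_succ_right_eq (2 * n - k) n
      have h2 := Nat.choose_succ_right_eq (2 * n - k) (n + 1)
      rw [show 2 * n - k - n = n - k from by omega] at h1
      rw [show 2 * n - k - (n + 1) = n - k - 1 from by omega] at h2
      have h1' : ((2 * n - k).choose (n + 1) : ℤ) * (n + 1)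
          = ((2 * n - k).choose n : ℤ) * ((n : ℤ) - k) := by
        have := congrArg (Nat.cast (R := ℤ)) h1
        push_cast [Nat.cast_sub hk] at this ⊢
        linarith
      have h2' : ((2 * n - k).choose (n + 2) : ℤ) * (n + 2)
          = ((2 * n - k).choose (n + 1) : ℤ) * ((n : ℤ) - k - 1) := by
        have := congrArg (Nat.cast (R := ℤ)) h2
        have hcast : ((n - k - 1 : ℕ) : ℤ) = (n : ℤ) - k - 1 := by omega
        push_cast at this
        rw [hcast] at this
        linarith
      rw [cwF_eq (by omega)]
      linear_combination (-1 : ℤ) * h1' + h2'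
  · rw [cwF, if_neg hk]
    by_cases h2 : k ≤ 2 * n
    · rw [Nat.choose_eq_zero_of_lt (by omega), Nat.choose_eq_zero_of_lt (by omega)]
      ring
    · rw [show 2 * n - k = 0 from by omega]
      rw [Nat.choose_eq_zero_of_lt (by omega), Nat.choose_eq_zero_of_lt (by omega)]
      ring

lemma sum_Icc_choose_int (r : ℕ) : ∀ {y x : ℕ}, x ≤ y + 1 →
    ∑ t ∈ Icc x y, (t.choose r : ℤ) = ((y + 1).choose (r + 1) : ℤ) - (x.choose (r + 1) : ℤ) := by
  intro y
  induction y with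
  | zero =>
    intro x hx
    interval_cases x
    · simp only [Finset.Icc_self, Finset.sum_singleton]
      rcases r with _ | r
      · simp
      · simp [Nat.choose_eq_zero_of_lt]
    · rw [show Icc 1 0 = ∅ from by simp]
      simp
  | succ y ih =>
    intro x hx
    by_cases hx' : x ≤ y + 1
    · rw [Finset.sum_Icc_succ_top hx', ih hx']
      have hp := pascal' (a := y + 1 + 1) (b := r + 1) (a' := y + 1) (b' := r) rfl rfl
      push_cast [hp]
      ring
    · rw [show x = y + 2 from by omega, show Icc (y + 2) (y + 1) = ∅ from by
        apply Finset.Icc_eq_empty; omega]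
      simp

lemma key_sum {a b c : ℕ} (r : ℕ) (hab : a ≤ b + 1) (hbc : b ≤ c) (hac : a ≤ c) :
    ∑ m ∈ Icc a b, ((c - m).choose r : ℤ)
      = ((c - a + 1).choose (r + 1) : ℤ) - ((c - b).choose (r + 1) : ℤ) := by
  have : ∑ m ∈ Icc a b, ((c - m).choose r : ℤ) = ∑ t ∈ Icc (c - b) (c - a), (t.choose r : ℤ) := by
    apply Finset.sum_nbij' (i := fun m => c - m) (j := fun t => c - t)
    · intro m hm; simp only [mem_Icc] at *; omega
    · intro t ht; simp only [mem_Icc] at *; omega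
    · intro m hm; simp only [mem_Icc] at hm; omega
    · intro t ht; simp only [mem_Icc] at ht; omega
    · intro m hm; rfl
  rw [this, sum_Icc_choose_int r (by omega)]

lemma cwF_rec {n k : ℕ} (hk : k ≤ n + 1) :
    ∑ m ∈ Icc (k - 1) n, cwF n m = cwF (n + 1) k := by
  have h1 : ∑ m ∈ Icc (k - 1) n, cwF n m
      = ∑ m ∈ Icc (k - 1) n, (((2 * n - m).choose n : ℤ) - ((2 * n - m).choose (n + 1) : ℤ)) := by
    refine Finset.sum_congr rfl fun m hm => ?_
    simp only [mem_Icc] at hm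
    exact cwF_eq (by omega)
  rw [h1, Finset.sum_sub_distrib,
    key_sum n (by omega) (by omega) (by omega),
    key_sum (n + 1) (by omega) (by omega) (by omega),
    show 2 * n - n = n from by omega,
    Nat.choose_eq_zero_of_lt (show n < n + 1 from by omega),
    Nat.choose_eq_zero_of_lt (show n < n + 1 + 1 from by omega),
    cwF_eq (show k ≤ 2 * (n + 1) from by omega)]
  rcases k with _ | j
  · rw [show 2 * n - (0 - 1) + 1 = 2 * n + 1 from by omega,
      show 2 * (n + 1) - 0 = 2 * n + 2 from by omega]
    have hs : (2 * n + 1).choose (n + 1) = (2 * n + 1).choose n := by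
      have := Nat.choose_symm (show n ≤ 2 * n + 1 from by omega)
      rwa [show 2 * n + 1 - n = n + 1 from by omega] at this
    have hp1 := pascal' (a := 2 * n + 2) (b := n + 1) (a' := 2 * n + 1) (b' := n) (by omega) rfl
    have hp2 := pascal' (a := 2 * n + 2) (b := n + 1 + 1) (a' := 2 * n + 1) (b' := n + 1)
      (by omega) rfl
    push_cast [hp1, hp2, hs]
    ring
  · rw [show 2 * n - (j + 1 - 1) + 1 = 2 * (n + 1) - (j + 1) from by omega]
    push_cast
    ring

lemma cwS_eq {n : ℕ} (k : ℕ) (hn : 1 ≤ n) :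
    cwS n k = (n + 1) * cwF n k - ((n : ℤ) - 1 - k) * cwF (n - 1) k := by
  obtain ⟨m, rfl⟩ : ∃ m, n = m + 1 := ⟨n - 1, by omega⟩
  show (↑m + 2) * cwF (m + 1) k - ((m : ℤ) - ↑k) * cwF m k = _
  rw [show m + 1 - 1 = m from by omega]
  push_cast
  ring

lemma cwF_diag (n : ℕ) : cwF n n = 1 := by
  rw [cwF, if_pos le_rfl, show 2 * n - n = n from by omega, Nat.choose_self,
    Nat.choose_eq_zero_of_lt (show n < n + 1 from by omega)]
  simp

lemma cwF_of_gt {n k : ℕ} (h : n < k) : cwF n k = 0 := by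
  rw [cwF, if_neg (by omega)]

lemma cwF_zero_one {n : ℕ} (hn : 1 ≤ n) : cwF n 0 = cwF n 1 := by
  rw [cwF_eq (by omega), cwF_eq (by omega), show 2 * n - 0 = 2 * n from by omega]
  have hs : (2 * n - 1).choose (n - 1) = (2 * n - 1).choose n := by
    have := Nat.choose_symm (show n ≤ 2 * n - 1 from by omega)
    rwa [show 2 * n - 1 - n = n - 1 from by omega] at this
  have hp1 := pascal' (a := 2 * n) (b := n) (a' := 2 * n - 1) (b' := n - 1) (by omega) (by omega)
  have hp2 := pascal' (a := 2 * n) (b := n + 1) (a' := 2 * n - 1) (b' := n) (by omega) rfl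
  push_cast [hp1, hp2, hs]
  ring

lemma ite_sum_pair {p j : ℕ} (hj : j + 1 ≤ p + 2) :
    ∑ m ∈ Icc j (p + 2), (if m ≤ j + 1 then cwF (p + 2) m else 0)
      = cwF (p + 2) j + cwF (p + 2) (j + 1) := by
  rw [← Finset.sum_filter,
    show (Icc j (p + 2)).filter (fun m => m ≤ j + 1) = Icc j (j + 1) from by
      ext x; simp only [mem_filter, mem_Icc]; omega,
    Finset.sum_Icc_succ_top (by omega), Finset.Icc_self, Finset.sum_singleton]

lemma cwS_rec_main {p j : ℕ} (hj : j ≤ p + 1) :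
    cwS (p + 3) (j + 1) = (∑ m ∈ Icc j (p + 2), cwS (p + 2) m)
      + ∑ m ∈ Icc j (p + 2), (if m ≤ j + 1 then cwF (p + 2) m else 0) := by
  -- the sum of cwS over the interval
  have hA : ∑ m ∈ Icc j (p + 2), cwF (p + 2) m = cwF (p + 3) (j + 1) := by
    have := cwF_rec (n := p + 2) (k := j + 1) (by omega)
    rwa [show j + 1 - 1 = j from by omega] at this
  have hB : ∑ m ∈ Icc j (p + 2), ((p + 1 : ℤ) - m) * cwF (p + 1) m
      = (p + 1) * (((2 * p + 3 - j).choose (p + 3) : ℤ))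
        - (p + 3) * (((2 * p + 3 - j).choose (p + 4) : ℤ)) := by
    have e : ∀ m ∈ Icc j (p + 2), ((p + 1 : ℤ) - m) * cwF (p + 1) m
        = (p + 1) * (((2 * p + 2 - m).choose (p + 2) : ℤ))
          - (p + 3) * (((2 * p + 2 - m).choose (p + 3) : ℤ)) := by
      intro m hm
      have h := cwF_absorb (p + 1) m
      rw [show 2 * (p + 1) - m = 2 * p + 2 - m from by omega,
        show p + 1 + 1 = p + 2 from by omega, show p + 1 + 2 = p + 3 from by omega] at h
      push_cast at h ⊢
      linarith
    rw [Finset.sum_congr rfl e, Finset.sum_sub_distrib, ← Finset.mul_sum, ← Finset.mul_sum,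
      key_sum (p + 2) (by omega) (by omega) (by omega),
      key_sum (p + 3) (by omega) (by omega) (by omega),
      show 2 * p + 2 - j + 1 = 2 * p + 3 - j from by omega,
      show 2 * p + 2 - (p + 2) = p from by omega,
      Nat.choose_eq_zero_of_lt (show p < p + 2 + 1 from by omega),
      Nat.choose_eq_zero_of_lt (show p < p + 3 + 1 from by omega),
      show p + 2 + 1 = p + 3 from by omega, show p + 3 + 1 = p + 4 from by omega]
    push_cast
    ring
  have hS : ∑ m ∈ Icc j (p + 2), cwS (p + 2) m
      = (p + 3) * cwF (p + 3) (j + 1)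
        - ((p + 1) * (((2 * p + 3 - j).choose (p + 3) : ℤ))
           - (p + 3) * (((2 * p + 3 - j).choose (p + 4) : ℤ))) := by
    have e : ∀ m ∈ Icc j (p + 2), cwS (p + 2) m
        = (p + 3) * cwF (p + 2) m - ((p + 1 : ℤ) - m) * cwF (p + 1) m := by
      intro m _
      rw [cwS_eq m (by omega), show p + 2 - 1 = p + 1 from by omega]
      push_cast
      ring
    rw [Finset.sum_congr rfl e, Finset.sum_sub_distrib, ← Finset.mul_sum, hA, hB]
  rw [hS, ite_sum_pair (by omega), cwS_eq (j + 1) (by omega),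
    show p + 3 - 1 = p + 2 from by omega]
  have habs := cwF_absorb (p + 2) (j + 1)
  rw [show 2 * (p + 2) - (j + 1) = 2 * p + 3 - j from by omega,
    show p + 2 + 1 = p + 3 from by omega, show p + 2 + 2 = p + 4 from by omega] at habs
  have key : cwF (p + 3) (j + 1) - ((2 * p + 3 - j).choose (p + 3) : ℤ)
        + ((2 * p + 3 - j).choose (p + 4) : ℤ)
      = cwF (p + 2) j + cwF (p + 2) (j + 1) := by
    rw [cwF_eq (show j + 1 ≤ 2 * (p + 3) from by omega),
      cwF_eq (show j ≤ 2 * (p + 2) from by omega),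
      cwF_eq (show j + 1 ≤ 2 * (p + 2) from by omega),
      show 2 * (p + 3) - (j + 1) = 2 * p + 5 - j from by omega,
      show 2 * (p + 2) - (j + 1) = 2 * p + 3 - j from by omega,
      show 2 * (p + 2) - j = 2 * p + 4 - j from by omega,
      show p + 3 + 1 = p + 4 from by omega, show p + 2 + 1 = p + 3 from by omega]
    have hp1 := pascal' (a := 2 * p + 5 - j) (b := p + 3) (a' := 2 * p + 4 - j) (b' := p + 2)
      (by omega) (by omega)
    have hp2 := pascal' (a := 2 * p + 5 - j) (b := p + 4) (a' := 2 * p + 4 - j) (b' := p + 3)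
      (by omega) (by omega)
    have hp4 := pascal' (a := 2 * p + 4 - j) (b := p + 3) (a' := 2 * p + 3 - j) (b' := p + 2)
      (by omega) (by omega)
    have hp5 := pascal' (a := 2 * p + 4 - j) (b := p + 4) (a' := 2 * p + 3 - j) (b' := p + 3)
      (by omega) (by omega)
    push_cast [hp1, hp2, hp4, hp5]
    ring
  push_cast at habs key ⊢
  linear_combination key - habs

lemma ite_sum_zero {p : ℕ} :
    ∑ m ∈ Icc 0 (p + 2), (if m ≤ 0 then cwF (p + 2) m else 0) = cwF (p + 2) 0 := by
  rw [← Finset.sum_filter,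
    show (Icc 0 (p + 2)).filter (fun m => m ≤ 0) = {0} from by
      ext x; simp only [mem_filter, mem_Icc, Finset.mem_singleton]; omega,
    Finset.sum_singleton]

lemma cwS_rec {n k : ℕ} (hk : k ≤ n + 1) :
    cwS (n + 1) k = (∑ m ∈ Icc (k - 1) n, cwS n m)
      + ∑ m ∈ Icc (k - 1) n, (if m ≤ k then cwF n m else 0) := by
  match n, k with
  | 0, k =>
    interval_cases k <;> decide
  | 1, k =>
    interval_cases k <;> decide
  | (p + 2), 0 =>
    have h1 := cwS_rec_main (p := p) (j := 0) (by omega)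
    rw [ite_sum_pair (by omega)] at h1
    rw [show (0 : ℕ) - 1 = 0 from by omega, ite_sum_zero]
    have hz3 : cwF (p + 3) 0 = cwF (p + 3) 1 := cwF_zero_one (by omega)
    have hz2 : cwF (p + 2) 0 = cwF (p + 2) 1 := cwF_zero_one (by omega)
    have ha : cwS (p + 3) 0 = cwS (p + 3) 1 - cwF (p + 2) 1 := by
      rw [cwS_eq 0 (by omega), cwS_eq 1 (by omega), show p + 3 - 1 = p + 2 from by omega]
      push_cast at hz3 hz2 ⊢
      linear_combination ((p : ℤ) + 4) * hz3 - ((p : ℤ) + 2) * hz2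
    rw [ha, h1]
    ring
  | (p + 2), (j + 1) =>
    rcases Nat.lt_or_ge j (p + 2) with hj | hj
    · have h := cwS_rec_main (p := p) (j := j) (by omega)
      rwa [show j + 1 - 1 = j from by omega]
    · have hj' : j = p + 2 := by omega
      subst hj'
      rw [show p + 2 + 1 - 1 = p + 2 from by omega, Finset.Icc_self, Finset.sum_singleton,
        Finset.sum_singleton, if_pos (by omega), cwS_eq (p + 3) (by omega),
        cwS_eq (p + 2) (by omega), show p + 3 - 1 = p + 2 from by omega,
        show p + 2 - 1 = p + 1 from by omega, cwF_diag,
        cwF_of_gt (show p + 2 < p + 3 from by omega),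
        cwF_of_gt (show p + 1 < p + 2 from by omega), cwF_diag]
      push_cast
      ring

lemma cwS_total (p : ℕ) :
    ∑ k ∈ range (p + 1), cwS p k
      = ((2 * (p + 1)).choose (p + 1) : ℤ) - ((2 * p).choose p : ℤ) := by
  match p with
  | 0 => decide
  | 1 => decide
  | (q + 2) =>
    rw [Finset.range_eq_Ico, show q + 2 + 1 = (q + 2) + 1 from rfl, Finset.Ico_add_one_right_eq_Icc]
    have e : ∀ k ∈ Icc 0 (q + 2), cwS (q + 2) k
        = (q + 3) * cwF (q + 2) k - ((q + 1 : ℤ) - k) * cwF (q + 1) k := by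
      intro k _
      rw [cwS_eq k (by omega), show q + 2 - 1 = q + 1 from by omega]
      push_cast
      ring
    have hA : ∑ k ∈ Icc 0 (q + 2), cwF (q + 2) k = cwF (q + 3) 1 := by
      have := cwF_rec (n := q + 2) (k := 1) (by omega)
      rwa [show (1 : ℕ) - 1 = 0 from by omega] at this
    have hB : ∑ k ∈ Icc 0 (q + 2), ((q + 1 : ℤ) - k) * cwF (q + 1) k
        = (q + 1) * (((2 * q + 3).choose (q + 3) : ℤ))
          - (q + 3) * (((2 * q + 3).choose (q + 4) : ℤ)) := by
      have e2 : ∀ k ∈ Icc 0 (q + 2), ((q + 1 : ℤ) - k) * cwF (q + 1) k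
          = (q + 1) * (((2 * q + 2 - k).choose (q + 2) : ℤ))
            - (q + 3) * (((2 * q + 2 - k).choose (q + 3) : ℤ)) := by
        intro k _
        have h := cwF_absorb (q + 1) k
        rw [show 2 * (q + 1) - k = 2 * q + 2 - k from by omega,
          show q + 1 + 1 = q + 2 from by omega, show q + 1 + 2 = q + 3 from by omega] at h
        push_cast at h ⊢
        linarith
      rw [Finset.sum_congr rfl e2, Finset.sum_sub_distrib, ← Finset.mul_sum, ← Finset.mul_sum,
        key_sum (q + 2) (by omega) (by omega) (by omega),
        key_sum (q + 3) (by omega) (by omega) (by omega),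
        show 2 * q + 2 - 0 + 1 = 2 * q + 3 from by omega,
        show 2 * q + 2 - (q + 2) = q from by omega,
        Nat.choose_eq_zero_of_lt (show q < q + 2 + 1 from by omega),
        Nat.choose_eq_zero_of_lt (show q < q + 3 + 1 from by omega),
        show q + 2 + 1 = q + 3 from by omega, show q + 3 + 1 = q + 4 from by omega]
      push_cast
      ring
    rw [Finset.sum_congr rfl e, Finset.sum_sub_distrib, ← Finset.mul_sum, hA, hB,
      cwF_eq (show 1 ≤ 2 * (q + 3) from by omega),
      show 2 * (q + 3) - 1 = 2 * q + 5 from by omega,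
      show q + 3 + 1 = q + 4 from by omega,
      show 2 * (q + 2 + 1) = 2 * q + 6 from by omega,
      show q + 2 + 1 = q + 3 from by omega,
      show 2 * (q + 2) = 2 * q + 4 from by omega]
    -- abbreviations: a = C(2q+3,q+1), b = C(2q+3,q+2), c = C(2q+3,q+3), d = C(2q+3,q+4),
    -- e = C(2q+3,q)
    have hab : (2 * q + 3).choose (q + 2) = (2 * q + 3).choose (q + 1) := by
      have := Nat.choose_symm (show q + 1 ≤ 2 * q + 3 from by omega)
      rwa [show 2 * q + 3 - (q + 1) = q + 2 from by omega] at this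
    have habs1 := Nat.choose_succ_right_eq (2 * q + 3) (q + 2)
    rw [show 2 * q + 3 - (q + 2) = q + 1 from by omega,
      show q + 2 + 1 = q + 3 from by omega] at habs1
    have habs2 := Nat.choose_succ_right_eq (2 * q + 3) q
    rw [show 2 * q + 3 - q = q + 3 from by omega] at habs2
    have hp1 := pascal' (a := 2 * q + 5) (b := q + 3) (a' := 2 * q + 4) (b' := q + 2)
      (by omega) (by omega)
    have hp2 := pascal' (a := 2 * q + 5) (b := q + 4) (a' := 2 * q + 4) (b' := q + 3)
      (by omega) (by omega)
    have hp3 := pascal' (a := 2 * q + 5) (b := q + 2) (a' := 2 * q + 4) (b' := q + 1)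
      (by omega) (by omega)
    have hp4 := pascal' (a := 2 * q + 4) (b := q + 2) (a' := 2 * q + 3) (b' := q + 1)
      (by omega) (by omega)
    have hp5 := pascal' (a := 2 * q + 4) (b := q + 3) (a' := 2 * q + 3) (b' := q + 2)
      (by omega) (by omega)
    have hp6 := pascal' (a := 2 * q + 4) (b := q + 4) (a' := 2 * q + 3) (b' := q + 3)
      (by omega) (by omega)
    have hp7 := pascal' (a := 2 * q + 4) (b := q + 1) (a' := 2 * q + 3) (b' := q)
      (by omega) (by omega)
    have hp8 := pascal' (a := 2 * q + 6) (b := q + 3) (a' := 2 * q + 5) (b' := q + 2)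
      (by omega) (by omega)
    have hmain : ((q : ℤ) + 1) * ((2 * q + 3).choose (q + 1) : ℤ)
          + ((q : ℤ) + 1) * ((2 * q + 3).choose (q + 2) : ℤ)
        = ((2 * q + 3).choose q : ℤ) + (2 * (q : ℤ) + 5) * ((2 * q + 3).choose (q + 3) : ℤ) := by
      apply mul_left_cancel₀ (show ((q : ℤ) + 3) ≠ 0 from by positivity)
      zify at hab habs1 habs2
      linear_combination habs2 - (2 * (q : ℤ) + 5) * habs1 - ((q : ℤ) + 1) * ((q : ℤ) + 2) * hab
    push_cast [hp8, hp1, hp2, hp3, hp4, hp5, hp6, hp7]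
    linear_combination hmain

/-! ### The finset of Catalan words of length `n+1` ending with letter `k` -/

def CWL : ℕ → ℕ → Finset (List ℕ)
  | 0, k => if k = 0 then {[0]} else ∅
  | n + 1, k => (Finset.Icc (k - 1) n).biUnion fun m => (CWL n m).image (fun w => w ++ [k])

def IsCW (n k : ℕ) (w : List ℕ) : Prop :=
  w.length = n + 1 ∧ w.getD n 0 = k ∧ w.getD 0 0 = 0 ∧
    ∀ i, i + 1 ≤ n → w.getD (i + 1) 0 ≤ w.getD i 0 + 1

lemma isCW_getD_le {n k : ℕ} {w : List ℕ} (h : IsCW n k w) : ∀ i, i ≤ n → w.getD i 0 ≤ i := by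
  obtain ⟨h1, h2, h3, h4⟩ := h
  intro i
  induction i with
  | zero => intro _; omega
  | succ i ih =>
    intro hi
    have e1 := h4 i (by omega)
    have e2 := ih (by omega)
    omega

lemma mem_CWL : ∀ (n k : ℕ) (w : List ℕ), w ∈ CWL n k ↔ IsCW n k w := by
  intro n
  induction n with
  | zero =>
    intro k w
    rw [CWL]
    constructor
    · intro hw
      split_ifs at hw with hk
      · subst hk
        simp only [Finset.mem_singleton] at hw
        subst hw
        exact ⟨rfl, rfl, rfl, fun i hi => by omega⟩
      · simp at hw
    · rintro ⟨h1, h2, h3, h4⟩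
      obtain ⟨a, rfl⟩ := List.length_eq_one_iff.mp h1
      simp only [List.getD] at h2 h3
      simp at h2 h3
      subst h2; subst h3
      simp
  | succ n ih =>
    intro k w
    rw [CWL]
    simp only [Finset.mem_biUnion, Finset.mem_image, Finset.mem_Icc]
    constructor
    · rintro ⟨m, ⟨hm1, hm2⟩, u, hu, rfl⟩
      obtain ⟨h1, h2, h3, h4⟩ := (ih m u).mp hu
      refine ⟨by simp [h1], ?_, ?_, ?_⟩
      · rw [List.getD_append_right u [k] 0 (n + 1) (by omega), h1]
        simp
      · rw [List.getD_append u [k] 0 0 (by omega)]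
        exact h3
      · intro i hi
        rcases Nat.lt_or_ge (i + 1) (n + 1) with hlt | hge
        · rw [List.getD_append u [k] 0 (i + 1) (by omega),
            List.getD_append u [k] 0 i (by omega)]
          exact h4 i (by omega)
        · rw [show i = n from by omega,
            List.getD_append_right u [k] 0 (n + 1) (by omega),
            List.getD_append u [k] 0 n (by omega), h1, h2]
          simp
          omega
    · rintro ⟨h1, h2, h3, h4⟩
      rcases w.eq_nil_or_concat with rfl | ⟨u, a, rfl⟩
      · simp at h1
      · rw [List.concat_eq_append] at *
        have hlen : u.length = n + 1 := by
          simp only [List.length_append, List.length_singleton] at h1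
          omega
        have ha : a = k := by
          rw [List.getD_append_right u [a] 0 (n + 1) (by omega), hlen] at h2
          simpa using h2
        subst ha
        have hu0 : u.getD 0 0 = 0 := by
          rw [List.getD_append u [a] 0 0 (by omega)] at h3
          exact h3
        have hstep : ∀ i, i + 1 ≤ n → u.getD (i + 1) 0 ≤ u.getD i 0 + 1 := by
          intro i hi
          have := h4 i (by omega)
          rwa [List.getD_append u [a] 0 (i + 1) (by omega),
            List.getD_append u [a] 0 i (by omega)] at this
        have hcw : IsCW n (u.getD n 0) u := ⟨hlen, rfl, hu0, hstep⟩
        have hlast : a ≤ u.getD n 0 + 1 := by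
          have := h4 n (by omega)
          rwa [List.getD_append_right u [a] 0 (n + 1) (by omega), hlen,
            List.getD_append u [a] 0 n (by omega), show n + 1 - (n + 1) = 0 from by omega] at this
        have hbd : u.getD n 0 ≤ n := isCW_getD_le hcw n le_rfl
        exact ⟨u.getD n 0, ⟨by omega, hbd⟩, u, (ih _ u).mpr hcw, rfl⟩

lemma descRuns_append (w : List ℕ) (q : ℕ) (hw : w.length = q + 1) (a : ℕ) :
    descRuns (w ++ [a]) = descRuns w + (if w.getD q 0 ≤ a then 1 else 0) := by
  have hgq : (w ++ [a]).getD q 0 = w.getD q 0 := List.getD_append w [a] 0 q (by omega)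
  have hgq1 : (w ++ [a]).getD (q + 1) 0 = a := by
    rw [List.getD_append_right w [a] 0 (q + 1) (by omega), hw]
    simp
  have hfil : (Finset.range q).filter
        (fun i => (w ++ [a]).getD i 0 ≤ (w ++ [a]).getD (i + 1) 0)
      = (Finset.range q).filter (fun i => w.getD i 0 ≤ w.getD (i + 1) 0) := by
    refine Finset.filter_congr fun i hi => ?_
    simp only [Finset.mem_range] at hi
    rw [List.getD_append w [a] 0 i (by omega), List.getD_append w [a] 0 (i + 1) (by omega)]
  unfold descRuns
  rw [show (w ++ [a]).length - 1 = q + 1 from by simp [hw], hw,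
    show q + 1 - 1 = q from rfl, Finset.range_add_one, Finset.filter_insert]
  by_cases hc : w.getD q 0 ≤ a
  · rw [if_pos (by rw [hgq, hgq1]; exact hc), if_pos hc,
      Finset.card_insert_of_notMem (by simp), hfil]
    omega
  · rw [if_neg (by rw [hgq, hgq1]; exact hc), if_neg hc, hfil]
    omega

lemma CWL_pairwiseDisjoint {n k : ℕ} :
    (↑(Finset.Icc (k - 1) n) : Set ℕ).PairwiseDisjoint
      (fun m => (CWL n m).image (fun w => w ++ [k])) := by
  intro m1 _ m2 _ hne
  simp only [Function.onFun]
  rw [Finset.disjoint_left]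
  rintro w hw1 hw2
  obtain ⟨u1, hu1, he1⟩ := Finset.mem_image.mp hw1
  obtain ⟨u2, hu2, he2⟩ := Finset.mem_image.mp hw2
  have : u1 = u2 := List.append_left_injective [k] (he1.trans he2.symm)
  subst this
  have e1 := ((mem_CWL n m1 u1).mp hu1).2.1
  have e2 := ((mem_CWL n m2 u1).mp hu2).2.1
  exact hne (e1.symm.trans e2)

lemma sum_CWL_succ (n k : ℕ) (g : List ℕ → ℤ) :
    ∑ w ∈ CWL (n + 1) k, g w = ∑ m ∈ Finset.Icc (k - 1) n, ∑ u ∈ CWL n m, g (u ++ [k]) := by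
  rw [CWL, Finset.sum_biUnion CWL_pairwiseDisjoint]
  refine Finset.sum_congr rfl fun m _ => ?_
  exact Finset.sum_image fun x _ y _ hxy => List.append_left_injective [k] hxy

lemma card_CWL : ∀ n k, (∑ w ∈ CWL n k, (1 : ℤ)) = cwF n k := by
  intro n
  induction n with
  | zero =>
    intro k
    rw [CWL]
    split_ifs with h
    · subst h; decide
    · rw [cwF, if_neg (by omega)]; simp
  | succ n ih =>
    intro k
    by_cases hk : k ≤ n + 1
    · rw [sum_CWL_succ, ← cwF_rec hk]
      exact Finset.sum_congr rfl fun m _ => ih m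
    · rw [sum_CWL_succ, Finset.Icc_eq_empty (by omega), Finset.sum_empty,
        cwF, if_neg hk]

lemma sum_CWL_descRuns : ∀ n k, (∑ w ∈ CWL n k, (descRuns w : ℤ)) = cwS n k := by
  intro n
  induction n with
  | zero =>
    intro k
    rw [CWL]
    split_ifs with h
    · subst h; decide
    · show (0 : ℤ) = cwS 0 k
      show (0 : ℤ) = cwF 0 k
      rw [cwF, if_neg (by omega)]
  | succ n ih =>
    intro k
    by_cases hk : k ≤ n + 1
    · rw [sum_CWL_succ, cwS_rec hk, ← Finset.sum_add_distrib]
      refine Finset.sum_congr rfl fun m hm => ?_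
      have hinner : ∀ u ∈ CWL n m, (descRuns (u ++ [k]) : ℤ)
          = (descRuns u : ℤ) + (if m ≤ k then (1 : ℤ) else 0) := by
        intro u hu
        obtain ⟨h1, h2, _, _⟩ := (mem_CWL n m u).mp hu
        rw [descRuns_append u n h1 k, h2]
        by_cases hmk : m ≤ k <;> simp [hmk]
      rw [Finset.sum_congr rfl hinner, Finset.sum_add_distrib, ih m]
      by_cases hmk : m ≤ k
      · rw [if_pos hmk]
        simp only [if_pos hmk]
        rw [card_CWL n m]
      · rw [if_neg hmk]
        simp only [if_neg hmk]
        simp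
    · rw [sum_CWL_succ, Finset.Icc_eq_empty (by omega), Finset.sum_empty,
        cwS_eq k (by omega), show n + 1 - 1 = n from rfl,
        cwF_of_gt (show n + 1 < k from by omega), cwF_of_gt (show n < k from by omega)]
      ring

lemma CWL_top_pairwiseDisjoint {p : ℕ} :
    (↑(Finset.range (p + 1)) : Set ℕ).PairwiseDisjoint (fun k => CWL p k) := by
  intro k1 _ k2 _ hne
  simp only [Function.onFun]
  rw [Finset.disjoint_left]
  rintro w hw1 hw2
  have e1 := ((mem_CWL p k1 w).mp hw1).2.1
  have e2 := ((mem_CWL p k2 w).mp hw2).2.1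
  exact hne (e1.symm.trans e2)

/-- The total number of runs of descents over all Catalan words of length `n` is
`C(2n,n) - C(2n-2,n-1)`. -/
theorem total_descRuns (n : ℕ) (hn : 1 ≤ n) :
    ((∑ᶠ w ∈ CatalanWord n, descRuns w : ℕ) : ℤ) =
      (Nat.choose (2 * n) n : ℤ) - (Nat.choose (2 * n - 2) (n - 1) : ℤ) := by
  obtain ⟨p, rfl⟩ : ∃ p, n = p + 1 := ⟨n - 1, by omega⟩
  have hset : CatalanWord (p + 1)
      = ↑((Finset.range (p + 1)).biUnion (fun k => CWL p k)) := by
    ext w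
    simp only [Finset.coe_biUnion, Set.mem_iUnion, Finset.mem_coe, Finset.mem_range,
      CatalanWord, Set.mem_setOf_eq, mem_CWL]
    constructor
    · rintro ⟨h1, h2, h3⟩
      have hcw : IsCW p (w.getD p 0) w := ⟨h1, rfl, h2, fun i hi => h3 i (by omega)⟩
      exact ⟨w.getD p 0, by have := isCW_getD_le hcw p le_rfl; omega, hcw⟩
    · rintro ⟨k, hk, h1, _, h3, h4⟩
      exact ⟨h1, h3, fun i hi => h4 i (by omega)⟩
  rw [hset, finsum_mem_coe_finset]
  rw [show ((∑ w ∈ (Finset.range (p + 1)).biUnion (fun k => CWL p k), descRuns w : ℕ) : ℤ)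
      = ∑ w ∈ (Finset.range (p + 1)).biUnion (fun k => CWL p k), (descRuns w : ℤ) from by
    push_cast; rfl]
  rw [Finset.sum_biUnion CWL_top_pairwiseDisjoint,
    Finset.sum_congr rfl (fun k _ => sum_CWL_descRuns p k), cwS_total p,
    show 2 * (p + 1) - 2 = 2 * p from by omega, show p + 1 - 1 = p from by omega]
end
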